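/- arXiv:2212.00123 — 4 statements merged into one kernel-verified Lean document; each statement's English description precedes it below -/
import Mathlib

section
/- Let n ≥ 2 and let φ, ψ be automorphisms of F_n. If occ(u, [φ(g)]) = occ(u, [ψ(g)]) for every nontrivial g ∈ F_n and every nonempty reduced word u, then ψ^{-1} ∘ φ is an inner automorphism of F_n; that is, the assignment of subword-count data to outer automorphisms is injective (faithfulness of the representation of Out(F_n)). -/
open List

/-- A letter of the free group `F_n`: a generator index together with a sign. -/
abbrev Letter (n : ℕ) := Fin n × Bool

/-- The inverse of a letter. -/
def linv {n : ℕ} (a : Letter n) : Letter n := (a.1, !a.2)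

@[simp] lemma linv_linv {n : ℕ} (a : Letter n) : linv (linv a) = a := by
  cases a with
  | mk x b => simp [linv]

/-- The (formal) inverse of a word. -/
def wInv {n : ℕ} (w : List (Letter n)) : List (Letter n) := (w.map linv).reverse

@[simp] lemma wInv_wInv {n : ℕ} (w : List (Letter n)) : wInv (wInv w) = w := by
  simp [wInv, Function.comp_def]

/-- A word is reduced if no two consecutive letters are mutually inverse. -/
def Reduced {n : ℕ} (w : List (Letter n)) : Prop :=
  List.Chain' (fun a b => b ≠ linv a) w

/-- A word is cyclically reduced if it is reduced and its first and last letters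
are not mutually inverse. -/
def CyclicallyReduced {n : ℕ} (w : List (Letter n)) : Prop :=
  Reduced w ∧ ∀ a b, w.head? = some a → w.getLast? = some b → a ≠ linv b

/-- `lpow l m` is the `m`-fold concatenation of the list `l` with itself. -/
def lpow {α : Type*} (l : List α) : ℕ → List α
  | 0 => []
  | m + 1 => l ++ lpow l m

/-- The number of oriented occurrences of `u` in the cyclic word represented by `w`. -/
def orientedOcc {n : ℕ} (u w : List (Letter n)) : ℕ :=
  ((Finset.range w.length).filter (fun i => u <+: lpow (w.rotate i) (u.length + 1))).card

/-- `occ u w` : occurrences of the unoriented word `{u, u⁻¹}` in the cyclic word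
represented by `w`. -/
def occ {n : ℕ} (u w : List (Letter n)) : ℕ :=
  orientedOcc u w + orientedOcc (wInv u) w

lemma occ_wInv {n : ℕ} (u w : List (Letter n)) : occ (wInv u) w = occ u w := by
  simp [occ, wInv_wInv, Nat.add_comm]

/-- Occurrences of `u` as a contiguous factor of `w`. -/
def factOcc {n : ℕ} (u w : List (Letter n)) : ℕ :=
  ((Finset.range (w.length + 1)).filter (fun i => u <+: w.drop i)).card

/-- `occf u w` : occurrences of `{u, u⁻¹}` as a contiguous factor of `w`. -/
def occf {n : ℕ} (u w : List (Letter n)) : ℕ := factOcc u w + factOcc (wInv u) w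

/-- Two cyclically reduced words represent the same cyclic word iff one is a
rotation of the other or of its inverse. -/
def SameCyclicWord {n : ℕ} (v w : List (Letter n)) : Prop :=
  (∃ i, w = v.rotate i) ∨ (∃ i, w = (wInv v).rotate i)

/-- Cyclic reduction: repeatedly delete the first and last letter while they are
mutually inverse. -/
def cyclicReduce {n : ℕ} : List (Letter n) → List (Letter n)
  | [] => []
  | a :: rest =>
    if rest.getLast? = some (linv a) then cyclicReduce rest.dropLast
    else a :: rest
  termination_by w => w.length
  decreasing_by simp [List.length_dropLast] <;> omega

/-!
Comparing the counts of single letters and of the whole word shows that the cyclic reductions of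
`φ g` and `ψ g` are rotations of each other or of each other's inverse, so `α = ψ⁻¹ ∘ φ` maps every
`g` to a conjugate of `g` or of `g⁻¹`.

Such an endomorphism of a free group of rank at least two is inner. After conjugating, `α x = x^ε`
for a generator `x`. For another generator `y`, `α y = u y^δ u⁻¹`, and `α (x y) = x^ε u y^δ u⁻¹`
must be conjugate to `(x y)^{±1}`; cancelling the letters of `u` that commute with their
neighbours leaves a cyclically reduced word, which has length two only if `δ = ε` and
`u ∈ ⟨x⟩⟨y⟩`. So after one more conjugation by a power of `x` also `α y = y^ε`, and the same
argument applied to `y z` gives `α z = z^ε` for every further generator `z`. Finally `ε = -1` is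
impossible since `x²yxy²` is not conjugate to its reverse.
-/

theorem IsConj.inv {G : Type*} [Group G] {a b : G} (h : IsConj a b) : IsConj a⁻¹ b⁻¹ := by
  obtain ⟨c, rfl⟩ := isConj_iff.mp h
  exact isConj_iff.mpr ⟨c, by group⟩

def IsConjUpToInv {G : Type*} [Group G] (a b : G) : Prop := IsConj a b ∨ IsConj a b⁻¹

theorem IsConj.trans_isConjUpToInv {G : Type*} [Group G] {a b c : G} (h₁ : IsConj a b)
    (h₂ : IsConjUpToInv b c) : IsConjUpToInv a c :=
  h₂.imp h₁.trans h₁.trans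

namespace IsConjUpToInv

variable {G H : Type*} [Group G] [Group H] {a b c : G}

theorem of_isConj (h : IsConj a b) : IsConjUpToInv a b := Or.inl h

theorem trans_isConj (h₁ : IsConjUpToInv a b) (h₂ : IsConj b c) : IsConjUpToInv a c :=
  h₁.imp (·.trans h₂) (·.trans h₂.inv)

theorem conj_left (h : IsConjUpToInv a b) (c : G) : IsConjUpToInv (c * a * c⁻¹) b :=
  (isConj_iff.mpr ⟨c⁻¹, by group⟩).trans_isConjUpToInv h

theorem map (h : IsConjUpToInv a b) (f : G →* H) : IsConjUpToInv (f a) (f b) :=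
  h.imp f.map_isConj fun h' => map_inv f b ▸ f.map_isConj h'

end IsConjUpToInv

theorem Commute.mul_conj_mul_right {G : Type*} [Group G] {s t : G} (h : Commute t s) (x u : G) :
    x * (u * t) * s * (u * t)⁻¹ = x * u * s * u⁻¹ := by
  rw [mul_inv_rev, ← mul_assoc, mul_assoc x, mul_assoc u, h.eq]
  group

theorem Commute.isConj_mul_conj_mul_left {G : Type*} [Group G] {x t : G} (h : Commute x t)
    (u s : G) : IsConj (x * u * s * u⁻¹) (x * (t * u) * s * (t * u)⁻¹) := by
  refine isConj_iff.mpr ⟨t, ?_⟩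
  rw [← mul_assoc x, h.eq]
  group

theorem List.isRotated_pair_iff {α : Type*} {a b : α} {l : List α} :
    [a, b] ~r l ↔ l = [a, b] ∨ l = [b, a] := by
  refine ⟨fun h => ?_, ?_⟩
  · obtain ⟨n, hn, rfl⟩ := isRotated_iff_mod.mp h
    have hn : n ≤ 2 := hn
    interval_cases n <;> simp
  · rintro (rfl | rfl)
    exacts [IsRotated.refl _, ⟨1, rfl⟩]

namespace FreeGroup

variable {ι : Type*} {L L' v w : List (ι × Bool)}

theorem fst_eq_imp_snd_eq_iff_ne {a b : ι × Bool} : (a.1 = b.1 → a.2 = b.2) ↔ b ≠ (a.1, !a.2) := by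
  rcases a with ⟨x, s⟩
  rcases b with ⟨y, r⟩
  cases s <;> cases r <;> simp [eq_comm]

theorem isCyclicallyReduced_iff_isReduced_append_self :
    IsCyclicallyReduced L ↔ IsReduced (L ++ L) := by
  simp only [isCyclicallyReduced_iff, IsReduced, isChain_append]
  exact ⟨fun ⟨h, hc⟩ => ⟨h, h, hc⟩, fun ⟨h, _, hc⟩ => ⟨h, hc⟩⟩

theorem IsReduced.invRev (h : IsReduced L) : IsReduced (invRev L) := by
  rw [IsReduced, FreeGroup.invRev, isChain_reverse, isChain_map]
  exact h.imp fun a b hab hba => by simpa using (hab hba.symm).symm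

theorem head?_invRev : (invRev L).head? = L.getLast?.map fun a => (a.1, !a.2) := by
  simp [FreeGroup.invRev, head?_reverse, getLast?_map]

theorem getLast?_invRev : (invRev L).getLast? = L.head?.map fun a => (a.1, !a.2) := by
  simp [FreeGroup.invRev, getLast?_reverse, head?_map]

theorem IsCyclicallyReduced.invRev (h : IsCyclicallyReduced L) :
    IsCyclicallyReduced (invRev L) := by
  rw [isCyclicallyReduced_iff_isReduced_append_self, ← invRev_append]
  exact (isCyclicallyReduced_iff_isReduced_append_self.mp h).invRev

theorem IsCyclicallyReduced.of_isRotated (h : IsCyclicallyReduced L) (hr : L ~r L') :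
    IsCyclicallyReduced L' := by
  obtain ⟨k, rfl⟩ := hr
  rcases eq_or_ne L [] with rfl | hL
  · simp
  have hLLL : IsReduced (L ++ L ++ L) := by
    have hLL := isCyclicallyReduced_iff_isReduced_append_self.mp h
    exact hLL.append_overlap hLL hL
  rw [rotate_eq_drop_append_take_mod, isCyclicallyReduced_iff_isReduced_append_self]
  have hab := take_append_drop (k % L.length) L
  generalize L.take (k % L.length) = a, L.drop (k % L.length) = b at hab ⊢
  subst hab
  exact hLLL.infix ⟨a, b, by simp⟩

theorem IsReduced.eq_of_mk_eq (hv : IsReduced v) (hw : IsReduced w) (h : mk v = mk w) :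
    v = w := by
  obtain ⟨x, hvx, hwx⟩ := Red.exact.mp h
  rw [← hv.red_iff_eq.mp hvx, hw.red_iff_eq.mp hwx]

theorem _root_.List.IsRotated.isConj_mk (h : L ~r L') : IsConj (mk L) (mk L') := by
  obtain ⟨k, rfl⟩ := h
  rw [rotate_eq_drop_append_take_mod, ← mul_mk]
  conv_lhs => rw [← take_append_drop (k % L.length) L, ← mul_mk]
  exact isConj_iff.mpr ⟨mk (L.drop (k % L.length)), by group⟩

theorem isReduced_append_append_invRev {c : List (ι × Bool)} (hc : IsReduced c)
    (hw : IsReduced w) (hw0 : w ≠ [])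
    (hfirst : ∀ a ∈ c.getLast?, ∀ b ∈ w.head?, a.1 = b.1 → a.2 = b.2)
    (hlast : ∀ a ∈ c.getLast?, ∀ b ∈ w.getLast?, b ≠ a) :
    IsReduced (c ++ w ++ invRev c) := by
  rw [IsReduced, isChain_append, isChain_append]
  refine ⟨⟨hc, hw, hfirst⟩, hc.invRev, fun b hb a' ha' => ?_⟩
  rw [getLast?_append_of_ne_nil _ hw0] at hb
  rw [head?_invRev, Option.mem_map] at ha'
  obtain ⟨a, ha, rfl⟩ := ha'
  have hba := hlast a ha b hb
  rcases a with ⟨x, s⟩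
  rcases b with ⟨y, t⟩
  simp only [ne_eq, Prod.mk.injEq, not_and] at hba ⊢
  intro hyx
  cases s <;> cases t <;> simp_all

theorem not_isCyclicallyReduced_append_append_invRev {c : List (ι × Bool)} (hc0 : c ≠ [])
    (w : List (ι × Bool)) : ¬ IsCyclicallyReduced (c ++ w ++ invRev c) := by
  obtain ⟨a, t, rfl⟩ := exists_cons_of_ne_nil hc0
  rw [isCyclicallyReduced_iff]
  rintro ⟨-, h⟩
  have hlast : (a :: t ++ w ++ invRev (a :: t)).getLast? = some (a.1, !a.2) := by
    rw [getLast?_append_of_ne_nil _ (by simp [FreeGroup.invRev]), getLast?_invRev]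
    rfl
  exact absurd (h _ hlast a (by simp) rfl) (by simp)

/-- Either the last letter `a` of `c` cancels against an end of `w`, and conjugating by `a` rotates
`w`, or `c w c⁻¹` is reduced as written and then is not cyclically reduced. -/
theorem IsCyclicallyReduced.isRotated_of_mk_eq_conj (hv : IsCyclicallyReduced v)
    (hw : IsCyclicallyReduced w) {c : List (ι × Bool)} (hc : IsReduced c)
    (h : mk v = mk c * mk w * (mk c)⁻¹) : w ~r v := by
  induction c using List.reverseRecOn generalizing w with
  | nil =>
    rw [hv.isReduced.eq_of_mk_eq hw.isReduced (by simpa using h)]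
  | append_singleton c a ih =>
    replace ih := fun {w} hw => ih (w := w) hw (hc.infix (prefix_append c [a]).isInfix)
    replace h : mk v = mk c * (mk [a] * mk w * (mk [a])⁻¹) * (mk c)⁻¹ := by
      rw [h, ← mul_mk]; group
    rcases eq_or_ne w [] with rfl | hw0
    · rw [hv.isReduced.eq_of_mk_eq IsReduced.nil (by rw [h, ← one_eq_mk]; group)]
    obtain ⟨b, t, rfl⟩ := exists_cons_of_ne_nil hw0
    by_cases hab : b = (a.1, !a.2)
    · have hb : mk [b] = (mk [a])⁻¹ := by rw [inv_mk, hab]; rfl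
      have hrot : mk [a] * mk (b :: t) * (mk [a])⁻¹ = mk (t ++ [b]) := by
        rw [show b :: t = [b] ++ t from rfl, ← mul_mk, ← mul_mk, hb]; group
      rw [hrot] at h
      exact IsRotated.cons_append_singleton.trans
        (ih (hw.of_isRotated IsRotated.cons_append_singleton) h)
    by_cases hlast : (b :: t).getLast? = some a
    · obtain ⟨d, hd⟩ : ∃ d, b :: t = d ++ [a] :=
        ⟨_, (dropLast_append_getLast? _ hlast).symm⟩
      have hrot : mk [a] * mk (d ++ [a]) * (mk [a])⁻¹ = mk (a :: d) := by
        rw [← mul_mk, show a :: d = [a] ++ d from rfl, ← mul_mk]; group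
      rw [hd, hrot] at h
      rw [hd] at hw ⊢
      exact (isRotated_concat a d).trans (ih ((hw.of_isRotated (isRotated_concat a d))) h)
    · exfalso
      have hred : IsReduced (c ++ [a] ++ (b :: t) ++ FreeGroup.invRev (c ++ [a])) := by
        refine isReduced_append_append_invRev hc hw.isReduced hw0 ?_ ?_ <;>
          simp only [getLast?_concat, Option.mem_some_iff, head?_cons, forall_eq']
        · exact fst_eq_imp_snd_eq_iff_ne.mpr hab
        · rintro _ hb rfl
          exact hlast hb
      refine not_isCyclicallyReduced_append_append_invRev (c := c ++ [a]) (by simp) (b :: t) ?_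
      rwa [← hv.isReduced.eq_of_mk_eq hred]
      rw [h]
      simp only [← mul_mk, ← inv_mk]
      group

theorem mk_singleton_mem_zpowers (a : ι × Bool) : mk [a] ∈ Subgroup.zpowers (of a.1) := by
  rcases a with ⟨x, _ | _⟩
  · exact Subgroup.inv_mem _ (Subgroup.mem_zpowers (of x))
  · exact Subgroup.mem_zpowers (of x)

theorem commute_mk_singleton {a b : ι × Bool} (h : a.1 = b.1) : Commute (mk [a]) (mk [b]) := by
  obtain ⟨p, hp⟩ := Subgroup.mem_zpowers_iff.mp (mk_singleton_mem_zpowers a)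
  obtain ⟨q, hq⟩ := Subgroup.mem_zpowers_iff.mp (mk_singleton_mem_zpowers b)
  rw [← hp, ← hq, h]
  exact Commute.zpow_zpow_self _ p q

theorem isCyclicallyReduced_pair {i j : ι} (hij : i ≠ j) (e f : Bool) :
    IsCyclicallyReduced [(i, e), (j, f)] := by
  simp [isCyclicallyReduced_iff, IsReduced, hij, hij.symm]

theorem isCyclicallyReduced_cons_append_singleton_append_invRev {i j : ι} (e f : Bool)
    (hL : IsReduced L) (hL0 : L ≠ []) (hhead : ∀ a ∈ L.head?, a.1 ≠ i)
    (hlast : ∀ z ∈ L.getLast?, z.1 ≠ j) :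
    IsCyclicallyReduced ((i, e) :: (L ++ [(j, f)] ++ FreeGroup.invRev L)) := by
  have hmid : IsReduced (L ++ [(j, f)] ++ FreeGroup.invRev L) :=
    isReduced_append_append_invRev hL IsReduced.singleton (cons_ne_nil _ _)
      (fun z hz y hy hzy => by
        simp only [head?_cons, Option.mem_some_iff] at hy
        subst hy
        exact absurd hzy (hlast z hz))
      (fun z hz y hy hyz => by
        simp only [getLast?_singleton, Option.mem_some_iff] at hy
        subst hy
        exact hlast z hz (congrArg Prod.fst hyz).symm)
  obtain ⟨a, s, rfl⟩ := exists_cons_of_ne_nil hL0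
  have ha : a.1 ≠ i := hhead a rfl
  rw [isCyclicallyReduced_iff, IsReduced, isChain_cons]
  refine ⟨⟨by simpa using fun h => absurd h.symm ha, hmid⟩, ?_⟩
  rw [getLast?_cons, getLast?_append_of_ne_nil _ (by simp [FreeGroup.invRev]),
    getLast?_invRev]
  simpa using fun h => absurd h ha

theorem exists_conj_mk_singleton_of_isConjUpToInv_of {g : FreeGroup ι} {i : ι}
    (h : IsConjUpToInv g (of i)) : ∃ c e, g = c * mk [(i, e)] * c⁻¹ := by
  rcases h with h | h <;> obtain ⟨c, rfl⟩ := isConj_iff.mp h.symm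
  exacts [⟨c, true, rfl⟩, ⟨c, false, rfl⟩]

section DecidableEq

variable [DecidableEq ι]

theorem IsCyclicallyReduced.isRotated_of_isConj (hv : IsCyclicallyReduced v)
    (hw : IsCyclicallyReduced w) (h : IsConj (mk v) (mk w)) : v ~r w := by
  obtain ⟨c, hc⟩ := isConj_iff.mp h
  rw [← mk_toWord (x := c)] at hc
  exact hw.isRotated_of_mk_eq_conj hv isReduced_toWord hc.symm

theorem IsCyclicallyReduced.isRotated_or_of_isConjUpToInv
    (hv : IsCyclicallyReduced v) (hw : IsCyclicallyReduced w) (h : IsConjUpToInv (mk v) (mk w)) :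
    v ~r w ∨ v ~r FreeGroup.invRev w := by
  refine h.imp (hv.isRotated_of_isConj hw) fun h' => hv.isRotated_of_isConj hw.invRev ?_
  rwa [← inv_mk]

theorem eq_of_isConjUpToInv_mk_pair {i j : ι} (hij : i ≠ j) {e f : Bool}
    (h : IsConjUpToInv (mk [(i, e), (j, f)]) (of i * of j)) : e = f := by
  rcases (isCyclicallyReduced_pair hij e f).isRotated_or_of_isConjUpToInv
    (isCyclicallyReduced_pair hij true true) h with h | h <;>
  · simp [List.isRotated_pair_iff, FreeGroup.invRev, hij, hij.symm] at h
    simp [h]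

theorem eq_and_exists_zpow_mul_zpow_of_isConjUpToInv_mk {i j : ι} (hij : i ≠ j)
    {e f : Bool} (L : List (ι × Bool)) (hL : IsReduced L)
    (h : IsConjUpToInv (mk [(i, e)] * mk L * mk [(j, f)] * (mk L)⁻¹) (of i * of j)) :
    e = f ∧ ∃ p q : ℤ, mk L = of i ^ p * of j ^ q := by
  by_cases hz : ∃ z ∈ L.getLast?, z.1 = j
  · obtain ⟨z, hz, hzj⟩ := hz
    obtain ⟨d, rfl⟩ : ∃ d, L = d ++ [z] := ⟨_, (dropLast_append_getLast? _ hz).symm⟩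
    rw [← mul_mk, (commute_mk_singleton (b := (j, f)) hzj).mul_conj_mul_right] at h
    obtain ⟨hef, p, q, hpq⟩ :=
      eq_and_exists_zpow_mul_zpow_of_isConjUpToInv_mk hij d (hL.infix (prefix_append _ _).isInfix) h
    obtain ⟨r, hr⟩ := Subgroup.mem_zpowers_iff.mp (mk_singleton_mem_zpowers z)
    refine ⟨hef, p, q + r, ?_⟩
    rw [← mul_mk, hpq, ← hr, hzj, zpow_add]
    group
  by_cases ha : ∃ a ∈ L.head?, a.1 = i
  · obtain ⟨a, ha, hai⟩ := ha
    obtain ⟨s, rfl⟩ := head?_eq_some_iff.mp ha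
    have hs := (commute_mk_singleton (a := (i, e)) hai.symm).isConj_mul_conj_mul_left (mk s)
      (mk [(j, f)])
    rw [mul_mk] at hs
    obtain ⟨hef, p, q, hpq⟩ := eq_and_exists_zpow_mul_zpow_of_isConjUpToInv_mk hij s
      (hL.infix (suffix_cons _ _).isInfix) (hs.trans_isConjUpToInv h)
    obtain ⟨r, hr⟩ := Subgroup.mem_zpowers_iff.mp (mk_singleton_mem_zpowers a)
    refine ⟨hef, r + p, q, ?_⟩
    rw [show a :: s = [a] ++ s from rfl, ← mul_mk, hpq, ← hr, hai, zpow_add]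
    group
  simp only [not_exists, not_and] at hz ha
  rcases eq_or_ne L [] with rfl | hL0
  · refine ⟨eq_of_isConjUpToInv_mk_pair hij ?_, 0, 0, by simp [← one_eq_mk]⟩
    simpa [← one_eq_mk, mul_mk] using h
  · exfalso
    have hW := isCyclicallyReduced_cons_append_singleton_append_invRev e f hL hL0 ha hz
    have hmk : mk ((i, e) :: (L ++ [(j, f)] ++ FreeGroup.invRev L)) =
        mk [(i, e)] * mk L * mk [(j, f)] * (mk L)⁻¹ := by
      rw [inv_mk]
      simp only [mul_mk]
      simp
    rw [← hmk] at h
    obtain ⟨a, s, rfl⟩ := exists_cons_of_ne_nil hL0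
    rcases hW.isRotated_or_of_isConjUpToInv (isCyclicallyReduced_pair hij true true) h with
      hr | hr <;>
    · have := hr.perm.length_eq
      simp [FreeGroup.invRev] at this
termination_by L.length
decreasing_by all_goals (subst_vars; simp)

theorem eq_and_exists_zpow_mul_zpow_of_isConjUpToInv {i j : ι} (hij : i ≠ j)
    {e f : Bool} {u : FreeGroup ι}
    (h : IsConjUpToInv (mk [(i, e)] * u * mk [(j, f)] * u⁻¹) (of i * of j)) :
    e = f ∧ ∃ p q : ℤ, u = of i ^ p * of j ^ q := by
  rw [← mk_toWord (x := u)] at h ⊢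
  exact eq_and_exists_zpow_mul_zpow_of_isConjUpToInv_mk hij _ isReduced_toWord h

theorem zpow_eq_zero_of_zpow_eq_zpow_mul_zpow {i j k : ι} (hj : j ≠ i)
    (hk : k ≠ i) {r p q : ℤ} (h : of i ^ r = of j ^ p * of k ^ q) : r = 0 := by
  simpa [hj, hk] using congrArg (Multiplicative.toAdd ∘
    lift fun x => Multiplicative.ofAdd (if x = i then (1 : ℤ) else 0)) h

/-- With `x = of false` and `y = of true`: `x²yxy²` is not conjugate to its reverse `y²xyx²`. -/
theorem not_isConjUpToInv_mk_aababb :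
    ¬ IsConjUpToInv
      (mk [(false, false), (false, false), (true, false), (false, false), (true, false),
        (true, false)])
      (mk [(false, true), (false, true), (true, true), (false, true), (true, true),
        (true, true)]) :=
  fun h => by
    rcases IsCyclicallyReduced.isRotated_or_of_isConjUpToInv
      (by simp [isCyclicallyReduced_iff, IsReduced]) (by simp [isCyclicallyReduced_iff, IsReduced])
      h
      with h | h <;> revert h <;> decide

variable {α : FreeGroup ι →* FreeGroup ι} {e : Bool}

theorem exists_zpow_conj_of_ne (H : ∀ g, IsConjUpToInv (α g) g) {i k : ι}
    (hi : α (of i) = mk [(i, e)]) (hk : k ≠ i) :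
    ∃ q : ℤ, α (of k) = of i ^ q * mk [(k, e)] * (of i ^ q)⁻¹ := by
  obtain ⟨u, b, hu⟩ := exists_conj_mk_singleton_of_isConjUpToInv_of (H (of k))
  have hik := H (of i * of k)
  rw [_root_.map_mul, hi, hu, ← mul_assoc, ← mul_assoc] at hik
  obtain ⟨rfl, p, q, rfl⟩ := eq_and_exists_zpow_mul_zpow_of_isConjUpToInv hk.symm hik
  obtain ⟨r, hr⟩ := Subgroup.mem_zpowers_iff.mp (mk_singleton_mem_zpowers (k, e))
  refine ⟨p, ?_⟩
  rw [hu, ← hr]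
  group

theorem apply_of_eq_mk_singleton (H : ∀ g, IsConjUpToInv (α g) g) {i j k : ι}
    (hi : α (of i) = mk [(i, e)]) (hj : α (of j) = mk [(j, e)]) (hji : j ≠ i) (hki : k ≠ i)
    (hkj : k ≠ j) :
    α (of k) = mk [(k, e)] := by
  obtain ⟨q, hq⟩ := exists_zpow_conj_of_ne H hi hki
  have hjk := H (of j * of k)
  rw [_root_.map_mul, hj, hq, ← mul_assoc, ← mul_assoc] at hjk
  obtain ⟨-, a, b, hab⟩ := eq_and_exists_zpow_mul_zpow_of_isConjUpToInv hkj.symm hjk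
  rw [hq, zpow_eq_zero_of_zpow_eq_zpow_mul_zpow hji hki hab]
  group

theorem eq_true_of_apply_of_eq_mk_singleton (H : ∀ g, IsConjUpToInv (α g) g) {i j : ι}
    (hij : i ≠ j) (hi : α (of i) = mk [(i, e)]) (hj : α (of j) = mk [(j, e)]) : e = true := by
  by_contra he
  rw [Bool.not_eq_true] at he
  subst he
  set g : FreeGroup ι := mk [(i, true), (i, true), (j, true), (i, true), (j, true), (j, true)]
  have hg : α g = mk [(i, false), (i, false), (j, false), (i, false), (j, false), (j, false)] := by
    rw [show g = of i * of i * of j * of i * of j * of j from rfl]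
    simp only [_root_.map_mul, hi, hj, mul_mk]
    rfl
  have := (H g).map (FreeGroup.map fun k => decide (k = j))
  rw [hg, map.mk, map.mk] at this
  simp only [map_cons, map_nil, decide_true, hij] at this
  exact not_isConjUpToInv_mk_aababb this

theorem exists_eq_conj_of_forall_isConjUpToInv [Nontrivial ι] (α : FreeGroup ι →* FreeGroup ι)
    (H : ∀ g, IsConjUpToInv (α g) g) : ∃ c, ∀ g, α g = c * g * c⁻¹ := by
  obtain ⟨i, j, hij⟩ := exists_pair_ne ι
  obtain ⟨c, e, hc⟩ := exists_conj_mk_singleton_of_isConjUpToInv_of (H (of i))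
  set β := (MulAut.conj c⁻¹).toMonoidHom.comp α
  have Hβ : ∀ g, IsConjUpToInv (β g) g := fun g => (H g).conj_left c⁻¹
  have hβi : β (of i) = mk [(i, e)] := by
    simp only [β, MonoidHom.comp_apply, MulEquiv.coe_toMonoidHom, MulAut.conj_apply, hc]
    group
  obtain ⟨p, hp⟩ := exists_zpow_conj_of_ne Hβ hβi hij.symm
  set γ := (MulAut.conj (of i ^ p)⁻¹).toMonoidHom.comp β
  have Hγ : ∀ g, IsConjUpToInv (γ g) g := fun g => (Hβ g).conj_left _
  have hγi : γ (of i) = mk [(i, e)] := by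
    obtain ⟨r, hr⟩ := Subgroup.mem_zpowers_iff.mp (mk_singleton_mem_zpowers (i, e))
    simp only [γ, MonoidHom.comp_apply, MulEquiv.coe_toMonoidHom, MulAut.conj_apply, hβi, ← hr]
    group
  have hγj : γ (of j) = mk [(j, e)] := by
    simp only [γ, MonoidHom.comp_apply, MulEquiv.coe_toMonoidHom, MulAut.conj_apply, hp]
    group
  have hγ : ∀ k, γ (of k) = of k := by
    obtain rfl := eq_true_of_apply_of_eq_mk_singleton Hγ hij hγi hγj
    intro k
    rcases eq_or_ne k i with rfl | hki
    · exact hγi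
    rcases eq_or_ne k j with rfl | hkj
    · exact hγj
    exact apply_of_eq_mk_singleton Hγ hγi hγj hij.symm hki hkj
  refine ⟨c * of i ^ p, fun g => ?_⟩
  have hg := DFunLike.congr_fun (ext_hom γ (MonoidHom.id _) hγ) g
  simp only [γ, β, MonoidHom.comp_apply, MulEquiv.coe_toMonoidHom, MulAut.conj_apply,
    MonoidHom.id_apply] at hg
  conv_rhs => rw [← hg]
  group

end DecidableEq

end FreeGroup

section CyclicWords

open FreeGroup

variable {n : ℕ}

theorem reduced_iff_isReduced {w : List (Letter n)} : Reduced w ↔ IsReduced w := by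
  simp only [Reduced, FreeGroup.IsReduced, fst_eq_imp_snd_eq_iff_ne]
  rfl

theorem cyclicReduce_eq_reduceCyclically (w : List (Letter n)) :
    cyclicReduce w = reduceCyclically w := by
  induction w using List.bidirectionalRec with
  | nil => rw [cyclicReduce.eq_1, reduceCyclically.nil]
  | singleton a => rw [cyclicReduce.eq_2]; simp
  | cons_append a L b ih =>
    rw [cyclicReduce.eq_2, reduceCyclically.cons_append, getLast?_concat, dropLast_concat, ih]
    congr 1
    rcases a with ⟨x, s⟩
    rcases b with ⟨y, t⟩
    cases s <;> cases t <;> simp [linv, eq_comm]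

theorem isConj_mk_cyclicReduce_toWord (g : FreeGroup (Fin n)) :
    IsConj g (mk (cyclicReduce g.toWord)) := by
  rw [cyclicReduce_eq_reduceCyclically]
  conv_lhs =>
    rw [← mk_toWord (x := g), ← reduceCyclically.conj_conjugator_reduceCyclically g.toWord]
  rw [← mul_mk, ← mul_mk, ← inv_mk]
  exact isConj_iff.mpr ⟨(mk (reduceCyclically.conjugator g.toWord))⁻¹, by group⟩

theorem reduced_cyclicReduce_toWord (g : FreeGroup (Fin n)) : Reduced (cyclicReduce g.toWord) := by
  rw [reduced_iff_isReduced, cyclicReduce_eq_reduceCyclically]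
  exact (reduceCyclically.isCyclicallyReduced isReduced_toWord).isReduced

theorem cyclicReduce_toWord_ne_nil {g : FreeGroup (Fin n)} (hg : g ≠ 1) :
    cyclicReduce g.toWord ≠ [] := by
  intro h
  have := isConj_mk_cyclicReduce_toWord g
  rw [h, ← one_eq_mk, isConj_one_left] at this
  exact hg this

theorem SameCyclicWord.isConjUpToInv {v w : List (Letter n)} (h : SameCyclicWord v w) :
    IsConjUpToInv (mk v) (mk w) := by
  rcases h with ⟨k, rfl⟩ | ⟨k, rfl⟩
  · exact .of_isConj (IsRotated.forall v k).symm.isConj_mk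
  · have := (IsRotated.forall (wInv v) k).symm.isConj_mk.inv
    rw [show wInv v = FreeGroup.invRev v from rfl, ← inv_mk, inv_inv] at this
    exact Or.inr this

theorem singleton_prefix_lpow_iff {α : Type*} {a : α} {l : List α} (hl : l ≠ [])
    {m : ℕ} (hm : m ≠ 0) : [a] <+: lpow l m ↔ l.head? = some a := by
  obtain ⟨b, t, rfl⟩ := exists_cons_of_ne_nil hl
  obtain ⟨m, rfl⟩ := Nat.exists_eq_succ_of_ne_zero hm
  simp [lpow, eq_comm]

theorem eq_of_prefix_lpow {α : Type*} {u l : List α} (hlen : u.length = l.length)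
    (h : u <+: lpow l (u.length + 1)) : u = l :=
  (prefix_of_prefix_length_le h (prefix_append l _) hlen.le).eq_of_length hlen

theorem sum_occ_singleton (v : List (Letter n)) :
    ∑ i : Fin n, occ [(i, true)] v = v.length := by
  have hocc : ∑ i : Fin n, occ [(i, true)] v = ∑ a : Letter n, orientedOcc [a] v := by
    rw [Fintype.sum_prod_type]
    exact Finset.sum_congr rfl fun i _ => by rw [Fintype.sum_bool]; rfl
  simp only [hocc, orientedOcc, Finset.card_filter]
  rw [Finset.sum_comm]
  trans ∑ k ∈ Finset.range v.length, 1
  · refine Finset.sum_congr rfl fun k hk => ?_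
    have hne : v.rotate k ≠ [] := by
      rw [Ne, rotate_eq_nil_iff, ← length_eq_zero_iff]
      exact (Finset.mem_range.mp hk).ne_zero
    obtain ⟨a, t, ha⟩ := exists_cons_of_ne_nil hne
    simp [ha, singleton_prefix_lpow_iff (cons_ne_nil a t)]
  · simp

theorem orientedOcc_self_pos {v : List (Letter n)} (hv : v ≠ []) : 0 < orientedOcc v v := by
  refine Finset.card_pos.mpr ⟨0, Finset.mem_filter.mpr ⟨?_, ?_⟩⟩
  · simpa using length_pos_iff.mpr hv
  · simp [lpow]

theorem sameCyclicWord_of_occ_eq {v w : List (Letter n)} (hv : Reduced v) (hv0 : v ≠ [])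
    (h : ∀ u : List (Letter n), u ≠ [] → Reduced u → occ u v = occ u w) : SameCyclicWord v w := by
  have hlen : v.length = w.length := by
    rw [← sum_occ_singleton v, ← sum_occ_singleton w]
    exact Finset.sum_congr rfl fun i _ => h _ (cons_ne_nil _ _) (List.isChain_singleton _)
  have hpos : 0 < occ v w := h v hv0 hv ▸ (orientedOcc_self_pos hv0).trans_le (Nat.le_add_right _ _)
  rcases Nat.add_pos_iff_pos_or_pos.mp hpos with hpos | hpos <;>
    obtain ⟨k, hk⟩ := Finset.card_pos.mp hpos <;>
    rw [Finset.mem_filter] at hk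
  · obtain ⟨i, hi⟩ := (show w ~r v from ⟨k, (eq_of_prefix_lpow (by simp [hlen]) hk.2).symm⟩).symm
    exact Or.inl ⟨i, hi.symm⟩
  · obtain ⟨i, hi⟩ :=
      (show w ~r wInv v from ⟨k, (eq_of_prefix_lpow (by simp [hlen, wInv]) hk.2).symm⟩).symm
    exact Or.inr ⟨i, hi.symm⟩

end CyclicWords

open FreeGroup in
/-- If two automorphisms of `F_n` define the same subword-count data
on all cyclic words, then they differ by an inner automorphism: the representation of
`Out(F_n)` is faithful. -/
theorem faithfulness (n : ℕ) (hn : 2 ≤ n)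
    (φ ψ : FreeGroup (Fin n) ≃* FreeGroup (Fin n))
    (h : ∀ g : FreeGroup (Fin n), g ≠ 1 →
      ∀ u : List (Letter n), u ≠ [] → Reduced u →
        occ u (cyclicReduce (FreeGroup.toWord (φ g))) =
        occ u (cyclicReduce (FreeGroup.toWord (ψ g)))) :
    ∃ c : FreeGroup (Fin n), ∀ g : FreeGroup (Fin n), ψ.symm (φ g) = c * g * c⁻¹ := by
  have : Nontrivial (Fin n) := Fin.nontrivial_iff_two_le.mpr hn
  refine exists_eq_conj_of_forall_isConjUpToInv (ψ.symm.toMonoidHom.comp φ.toMonoidHom)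
    fun g => ?_
  rcases eq_or_ne g 1 with rfl | hg
  · simpa using IsConjUpToInv.of_isConj (IsConj.refl 1)
  have hsame : SameCyclicWord (cyclicReduce (φ g).toWord) (cyclicReduce (ψ g).toWord) :=
    sameCyclicWord_of_occ_eq (reduced_cyclicReduce_toWord _)
      (cyclicReduce_toWord_ne_nil ((map_ne_one_iff φ φ.injective).mpr hg)) (h g hg)
  have hφψ : IsConjUpToInv (φ g) (ψ g) :=
    (isConj_mk_cyclicReduce_toWord (φ g)).trans_isConjUpToInv
      (hsame.isConjUpToInv.trans_isConj (isConj_mk_cyclicReduce_toWord (ψ g)).symm)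
  simpa using hφψ.map ψ.symm.toMonoidHom
end

section
/- (Gluing Lemma) Let t be a nonempty reduced word and let w₀, v₀ be nonempty reduced words such that the concatenations w = w₀t, v = tv₀ and s = w₀tv₀ are reduced (no cancellation at the junctions). Then for every reduced word u with 1 ≤ |u| ≤ |t| + 1 one has occf(u, s) = occf(u, w) + occf(u, v) − occf(u, t). -/
open List

lemma isPrefix_drop_append_iff {α : Type*} {u l c : List α} {i : ℕ} (hi : i ≤ l.length) :
    u <+: (l ++ c).drop i ∧ i + u.length ≤ l.length ↔ u <+: l.drop i := by
  have hl : l.drop i = (l.drop i ++ c).take (l.drop i).length := by simp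
  rw [List.drop_append_of_le_length hi, hl, List.prefix_take_iff, ← hl, List.length_drop]
  exact and_congr_right' (by omega)

section FactorPositions

variable {α : Type*} [DecidableEq α]

def factorPositions (u w : List α) : Finset ℕ :=
  (Finset.range (w.length + 1)).filter (fun i => u <+: w.drop i)

lemma factorPositions_append_filter_add_le (u l c : List α) :
    (factorPositions u (l ++ c)).filter (· + u.length ≤ l.length) = factorPositions u l := by
  ext i
  simp only [factorPositions, Finset.mem_filter, Finset.mem_range, List.length_append]
  constructor
  · rintro ⟨⟨-, hp⟩, hle⟩
    exact ⟨by omega, (isPrefix_drop_append_iff (by omega)).mp ⟨hp, hle⟩⟩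
  · rintro ⟨hi, hp⟩
    obtain ⟨hp', hle⟩ := (isPrefix_drop_append_iff (by omega)).mpr hp
    exact ⟨⟨by omega, hp'⟩, hle⟩

lemma factorPositions_append_filter_le (u a l : List α) :
    (factorPositions u (a ++ l)).filter (a.length ≤ ·) =
      (factorPositions u l).map (addRightEmbedding a.length) := by
  ext i
  simp only [factorPositions, Finset.mem_filter, Finset.mem_map, Finset.mem_range,
    addRightEmbedding_apply, List.length_append]
  have hdrop (j : ℕ) : (a ++ l).drop (j + a.length) = l.drop j := by simp [List.drop_append]
  constructor
  · rintro ⟨⟨hi, hp⟩, hai⟩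
    obtain ⟨j, rfl⟩ := Nat.exists_eq_add_of_le' hai
    exact ⟨j, ⟨by omega, hdrop j ▸ hp⟩, rfl⟩
  · rintro ⟨j, ⟨hj, hp⟩, rfl⟩
    exact ⟨⟨by omega, (hdrop j).symm ▸ hp⟩, by omega⟩

/-- Since `|u| ≤ |b| + 1`, every occurrence of `u` in `a ++ b ++ c` ends inside `a ++ b` or
starts inside `b ++ c`, and those doing both are the occurrences inside `b`;
the identity is inclusion–exclusion. -/
theorem card_factorPositions_glue (u a b c : List α) (hu : u.length ≤ b.length + 1) :
    (factorPositions u (a ++ b ++ c)).card + (factorPositions u b).card =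
      (factorPositions u (a ++ b)).card + (factorPositions u (b ++ c)).card := by
  have hEarly := factorPositions_append_filter_add_le u (a ++ b) c
  have hLate := factorPositions_append_filter_le u a (b ++ c)
  rw [← List.append_assoc] at hLate
  rw [List.length_append] at hEarly
  set S := factorPositions u (a ++ b ++ c)
  set endsEarly : ℕ → Prop := (· + u.length ≤ a.length + b.length)
  set startsLate : ℕ → Prop := (a.length ≤ ·)
  have hunion : S.filter endsEarly ∪ S.filter startsLate = S := by
    rw [← Finset.filter_or]
    exact Finset.filter_true_of_mem fun i _ => by simp only [endsEarly, startsLate]; omega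
  have hinter : S.filter endsEarly ∩ S.filter startsLate =
      (factorPositions u b).map (addRightEmbedding a.length) := by
    rw [← Finset.filter_and, ← Finset.filter_filter, Finset.filter_comm, hLate, Finset.filter_map,
      ← factorPositions_append_filter_add_le u b c]
    congr 2
    ext i
    simp only [Function.comp_apply, addRightEmbedding_apply, endsEarly]
    omega
  calc S.card + (factorPositions u b).card
      = (S.filter endsEarly ∪ S.filter startsLate).card +
          (S.filter endsEarly ∩ S.filter startsLate).card := by
        rw [hunion, hinter, Finset.card_map]
    _ = (S.filter endsEarly).card + (S.filter startsLate).card :=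
        Finset.card_union_add_card_inter _ _
    _ = _ := by rw [hEarly, hLate, Finset.card_map]

end FactorPositions

lemma length_wInv {n : ℕ} (u : List (Letter n)) : (wInv u).length = u.length := by
  simp [wInv]

theorem gluing_lemma_general (n : ℕ) (t w₀ v₀ : List (Letter n))
    (u : List (Letter n))
    (hu2 : u.length ≤ t.length + 1) :
    occf u (w₀ ++ t ++ v₀) + occf u t = occf u (w₀ ++ t) + occf u (t ++ v₀) := by
  have hglue (u' : List (Letter n)) (hu' : u'.length ≤ t.length + 1) :
      factOcc u' (w₀ ++ t ++ v₀) + factOcc u' t = factOcc u' (w₀ ++ t) + factOcc u' (t ++ v₀) :=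
    card_factorPositions_glue u' w₀ t v₀ hu'
  have hu := hglue u hu2
  have hu_inv := hglue (wInv u) (by rwa [length_wInv])
  simp only [occf]
  omega

/-- Gluing Lemma. If `w = w₀ ++ t`, `v = t ++ v₀` and
`s = w₀ ++ t ++ v₀` are reduced, then for every reduced `u` with `1 ≤ |u| ≤ |t| + 1`,
`occf(u, s) = occf(u, w) + occf(u, v) - occf(u, t)`. -/
theorem gluing_lemma (n : ℕ) (t w₀ v₀ : List (Letter n))
    (ht : t ≠ []) (htr : Reduced t) (hw₀ : w₀ ≠ []) (hv₀ : v₀ ≠ [])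
    (hw : Reduced (w₀ ++ t)) (hv : Reduced (t ++ v₀)) (hs : Reduced (w₀ ++ t ++ v₀))
    (u : List (Letter n)) (hur : Reduced u) (hu1 : 1 ≤ u.length)
    (hu2 : u.length ≤ t.length + 1) :
    occf u (w₀ ++ t ++ v₀) + occf u t = occf u (w₀ ++ t) + occf u (t ++ v₀) :=
  gluing_lemma_general n t w₀ v₀ u hu2
end

section
/- Let k ≥ 2, let t be a reduced word of length k−1, and let w be a reduced word of length strictly greater than k−1 having t both as a prefix and as a suffix. Let v be the prefix of w of length |w| − (k−1). Then v is cyclically reduced, and for every reduced word u of length k one has occf(u, w) = occ(u, V), where V is the cyclic word represented by v. -/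
open List

/-!
Writing `w = v ++ t`, the hypothesis that `t` is also a prefix of `w` says that `w` has period
`|v|`, so `w` is a prefix of `v v v ⋯`. A factor of length `k = |t| + 1` of `w` therefore starts
at one of the positions `0, …, |v| - 1` and is read off the cyclic word `v` from there; this
matches factor occurrences in `w` bijectively with cyclic occurrences in `v`. The junction
`v ++ t` is reduced and `t` starts with the first letter of `v`, so the last letter of `v` does
not cancel against its first: `v` is cyclically reduced.
-/

section Periodic

variable {α : Type*}

lemma length_lpow (l : List α) : ∀ m, (lpow l m).length = m * l.length
  | 0 => by simp [lpow]
  | m + 1 => by simp [lpow, length_lpow l m, Nat.succ_mul, Nat.add_comm]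

lemma prefix_lpow_append_of_prefix_append {v w : List α} (h : w <+: v ++ w) :
    ∀ N, w <+: lpow v N ++ w
  | 0 => by simp [lpow]
  | N + 1 => by
    obtain ⟨s, hs⟩ := prefix_lpow_append_of_prefix_append h N
    rw [lpow, append_assoc, ← hs, ← append_assoc]
    exact h.trans (prefix_append _ _)

lemma lpow_rotate_append_drop {v : List α} {i : ℕ} (hi : i ≤ v.length) :
    ∀ N, lpow (v.rotate i) N ++ v.drop i = (lpow v (N + 1)).drop i
  | 0 => by simp [lpow]
  | N + 1 => by
    rw [lpow, append_assoc, lpow_rotate_append_drop hi N, lpow, lpow,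
      drop_append_of_le_length hi, drop_append_of_le_length hi,
      rotate_eq_drop_append_take hi, append_assoc, ← append_assoc (v.take i),
      take_append_drop]
    rfl

lemma prefix_iff_prefix_of_prefix_of_prefix {u a b c : List α} (ha : a <+: c) (hb : b <+: c)
    (hua : u.length ≤ a.length) (hub : u.length ≤ b.length) : u <+: a ↔ u <+: b := by
  obtain ⟨s, rfl⟩ := ha
  obtain ⟨r, hr⟩ := hb
  rw [← isPrefix_append_of_length hua (l₃ := s), ← hr, isPrefix_append_of_length hub]

lemma prefix_drop_append_iff_prefix_lpow_rotate {u v t : List α} {i : ℕ}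
    (ht : t <+: v ++ t) (hi : i < v.length) (hu : u.length ≤ t.length + 1) :
    u <+: (v ++ t).drop i ↔ u <+: lpow (v.rotate i) (u.length + 1) := by
  have hperiod : v ++ t <+: v ++ (v ++ t) := (prefix_append_right_inj v).2 ht
  have hfactor :
      (v ++ t).drop i <+: lpow (v.rotate i) (u.length + 1) ++ (v.drop i ++ (v ++ t)) := by
    rw [← append_assoc, lpow_rotate_append_drop hi.le, ← drop_append_of_le_length
      (by rw [length_lpow]; nlinarith)]
    exact (prefix_lpow_append_of_prefix_append hperiod _).drop i
  refine prefix_iff_prefix_of_prefix_of_prefix hfactor (prefix_append _ _) ?_ ?_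
  · rw [length_drop, length_append]; omega
  · rw [length_lpow, length_rotate]; nlinarith

end Periodic

lemma factOcc_append_eq_orientedOcc {n : ℕ} {u v t : List (Letter n)} (ht : t <+: v ++ t)
    (hu : u.length = t.length + 1) : factOcc u (v ++ t) = orientedOcc u v := by
  rw [factOcc, orientedOcc]
  congr 1
  ext i
  simp only [Finset.mem_filter, Finset.mem_range]
  constructor
  · rintro ⟨-, h⟩
    have hi : i < v.length := by
      have := h.length_le
      rw [length_drop, length_append] at this
      omega
    exact ⟨hi, (prefix_drop_append_iff_prefix_lpow_rotate ht hi hu.le).1 h⟩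
  · rintro ⟨hi, h⟩
    exact ⟨by rw [length_append]; omega,
      (prefix_drop_append_iff_prefix_lpow_rotate ht hi hu.le).2 h⟩

lemma occf_append_eq_occ {n : ℕ} {u v t : List (Letter n)} (ht : t <+: v ++ t)
    (hu : u.length = t.length + 1) : occf u (v ++ t) = occ u v := by
  rw [occf, occ, factOcc_append_eq_orientedOcc ht hu,
    factOcc_append_eq_orientedOcc ht (by rw [length_wInv, hu])]

lemma cyclicallyReduced_of_reduced_append {n : ℕ} {v t : List (Letter n)}
    (hred : Reduced (v ++ t)) (ht : t <+: v ++ t) (hne : t ≠ []) : CyclicallyReduced v := by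
  obtain ⟨hv, -, hjoin⟩ := isChain_append.1 (show IsChain _ (v ++ t) from hred)
  refine ⟨hv, fun a b ha hb => ?_⟩
  obtain ⟨v', rfl⟩ := head?_eq_some_iff.1 ha
  obtain ⟨c, t', rfl⟩ := exists_cons_of_ne_nil hne
  obtain ⟨rfl, -⟩ := cons_prefix_cons.1 ht
  exact hjoin b hb c rfl

theorem selfGluing_general (n k : ℕ) (hk : 2 ≤ k) (t w : List (Letter n))
    (htl : t.length = k - 1)
    (hwr : Reduced w)
    (hpre : t <+: w) (hsuf : t <:+ w) :
    CyclicallyReduced (w.take (w.length - (k - 1))) ∧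
    ∀ u : List (Letter n), Reduced u → u.length = k →
      occf u w = occ u (w.take (w.length - (k - 1))) := by
  obtain ⟨v, rfl⟩ := hsuf
  have hv : (v ++ t).take ((v ++ t).length - (k - 1)) = v :=
    take_left' (by rw [length_append]; omega)
  rw [hv]
  exact ⟨cyclicallyReduced_of_reduced_append hwr hpre (ne_nil_of_length_pos (by omega)),
    fun u _ hu => occf_append_eq_occ hpre (by omega)⟩

/-- If a reduced word `w` of length `> k-1` has the reduced word `t`
of length `k-1` as both a prefix and a suffix, then the prefix `v` of `w` of length
`|w| - (k-1)` is cyclically reduced, and factor occurrences of any length-`k` reduced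
word `u` in `w` agree with its occurrences in the cyclic word represented by `v`. -/
theorem selfGluing (n k : ℕ) (hk : 2 ≤ k) (t w : List (Letter n))
    (htr : Reduced t) (htl : t.length = k - 1)
    (hwr : Reduced w) (hwl : k - 1 < w.length)
    (hpre : t <+: w) (hsuf : t <:+ w) :
    CyclicallyReduced (w.take (w.length - (k - 1))) ∧
    ∀ u : List (Letter n), Reduced u → u.length = k →
      occf u w = occ u (w.take (w.length - (k - 1))) :=
  selfGluing_general n k hk t w htl hwr hpre hsuf
end

section
/- Let W₁,…,W_m be pairwise distinct cyclic words, none of which is a proper power (i.e., no representative of any Wᵢ has the form v^l with l ≥ 2), and let a₁,…,a_m be integers, not all zero. Then there exists a nonempty reduced word u such that Σ_{i=1}^{m} aᵢ · occ(u, Wᵢ) ≠ 0. -/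
/-!
Fix `i₀` with `a i₀ ≠ 0` and put `x = w i₀`. For `K` at least the length of every `w j`, the
word `u = x^(K+1)` occurs in `W_{i₀}` but in no other `W_j`: an occurrence of `u` or `u⁻¹` in
`W_j` makes `x^(K+1)` (or `(x⁻¹)^(K+1)`) a prefix of a power of a rotation `v` of `w j`. The
common prefix is longer than `|x| + |v|`, which forces `x v = v x`; commuting words are powers
of a common word, so as both are primitive, `v = x` (resp. `v = x⁻¹`), i.e. `W_j = W_{i₀}`.
Hence the sum reduces to `a i₀ · occ(u, W_{i₀}) ≠ 0`.
-/

open List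

section Powers

variable {α : Type*}

@[simp] lemma lpow_length (l : List α) (m : ℕ) : (lpow l m).length = m * l.length := by
  induction m with
  | zero => simp [lpow]
  | succ k ih => simp [lpow, ih]; ring

lemma lpow_add (l : List α) (a b : ℕ) : lpow l (a + b) = lpow l a ++ lpow l b := by
  induction a with
  | zero => simp [lpow]
  | succ k ih => simp [Nat.succ_add, lpow, ih]

lemma lpow_succ' (l : List α) (m : ℕ) : lpow l (m + 1) = lpow l m ++ l := by
  rw [lpow_add]
  simp [lpow]

lemma lpow_prefix_lpow_of_le (l : List α) {a b : ℕ} (h : a ≤ b) : lpow l a <+: lpow l b := by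
  obtain ⟨c, rfl⟩ := Nat.exists_eq_add_of_le h
  rw [lpow_add]
  exact prefix_append _ _

@[simp] lemma nil_lpow (m : ℕ) : lpow ([] : List α) m = [] := by
  induction m with
  | zero => rfl
  | succ k ih => simp [lpow, ih]

lemma mem_head?_of_mem_head?_lpow {l : List α} {m : ℕ} {c : α} (h : c ∈ (lpow l m).head?) :
    c ∈ l.head? := by
  cases m with
  | zero => simp [lpow] at h
  | succ k => cases l with
    | nil => simp at h
    | cons b l => simpa [lpow] using h

/-- Lyndon–Schützenberger. -/
theorem exists_eq_lpow_of_append_comm {x v : List α} (h : x ++ v = v ++ x) :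
    ∃ r a b, x = lpow r a ∧ v = lpow r b := by
  induction hs : x.length + v.length using Nat.strong_induction_on generalizing x v with
  | _ s ih =>
  wlog hxv : x.length ≤ v.length generalizing x v
  · obtain ⟨r, a, b, hx, hv⟩ := this h.symm (by omega) (by omega)
    exact ⟨r, b, a, hv, hx⟩
  rcases eq_or_ne x [] with rfl | hx
  · exact ⟨v, 0, 1, rfl, by simp [lpow]⟩
  obtain ⟨v', rfl⟩ : x <+: v :=
    prefix_of_prefix_length_le (prefix_append x v) (h ▸ prefix_append v x) hxv
  have hcomm : x ++ v' = v' ++ x := by simpa using h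
  have hlen : x.length + v'.length < s := by
    have := length_pos_iff.2 hx
    simp only [length_append] at hs
    omega
  obtain ⟨r, a, b, hxr, hv'r⟩ := ih _ hlen hcomm rfl
  exact ⟨r, a, a + b, hxr, by rw [lpow_add, ← hxr, ← hv'r]⟩

theorem append_comm_of_lpow_prefix_lpow {x v : List α} {K M : ℕ}
    (h : lpow x (K + 1) <+: lpow v (M + 1)) (hK : v.length ≤ K * x.length)
    (hM : x.length ≤ M * v.length) : x ++ v = v ++ x := by
  have hv : v <+: lpow x K :=
    prefix_of_prefix_length_le (prefix_append v _)
      ((lpow_prefix_lpow_of_le x K.le_succ).trans h) (by simpa using hK)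
  have hx : x <+: lpow v M :=
    prefix_of_prefix_length_le ((prefix_append x _).trans h)
      (lpow_prefix_lpow_of_le v M.le_succ) (by simpa using hM)
  have hxv : x ++ v <+: lpow v (M + 1) := ((prefix_append_right_inj x).2 hv).trans h
  have hvx : v ++ x <+: lpow v (M + 1) := (prefix_append_right_inj v).2 hx
  exact (prefix_of_prefix_length_le hxv hvx (by simp [Nat.add_comm])).eq_of_length
    (by simp [Nat.add_comm])

def IsPrimitive (x : List α) : Prop :=
  ¬∃ (r : List α) (l : ℕ), 2 ≤ l ∧ x = lpow r l

lemma IsPrimitive.ne_nil {x : List α} (hx : IsPrimitive x) : x ≠ [] := by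
  rintro rfl
  exact hx ⟨[], 2, le_rfl, (nil_lpow 2).symm⟩

lemma IsPrimitive.eq_of_eq_lpow {x r : List α} {a : ℕ} (hx : IsPrimitive x)
    (h : x = lpow r a) : x = r := by
  match a, h with
  | 0, h => exact absurd h hx.ne_nil
  | 1, h => simpa [lpow] using h
  | a + 2, h => exact absurd ⟨r, a + 2, by omega, h⟩ hx

lemma IsPrimitive.eq_of_append_comm {x v : List α} (hx : IsPrimitive x) (hv : IsPrimitive v)
    (h : x ++ v = v ++ x) : x = v := by
  obtain ⟨r, a, b, hxr, hvr⟩ := exists_eq_lpow_of_append_comm h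
  rw [hx.eq_of_eq_lpow hxr, hv.eq_of_eq_lpow hvr]

lemma IsPrimitive.eq_of_lpow_prefix_lpow {x v : List α} {K M : ℕ} (hx : IsPrimitive x)
    (hv : IsPrimitive v) (h : lpow x (K + 1) <+: lpow v (M + 1))
    (hK : v.length ≤ K * x.length) (hM : x.length ≤ M * v.length) : x = v :=
  hx.eq_of_append_comm hv (append_comm_of_lpow_prefix_lpow h hK hM)

end Powers

section Words

variable {n : ℕ}

lemma wInv_append (a b : List (Letter n)) : wInv (a ++ b) = wInv b ++ wInv a := by
  simp [wInv]

lemma wInv_lpow (x : List (Letter n)) (k : ℕ) : wInv (lpow x k) = lpow (wInv x) k := by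
  induction k with
  | zero => simp [lpow, wInv]
  | succ m ih => rw [lpow, wInv_append, ih, lpow_succ']

@[simp] lemma wInv_length (l : List (Letter n)) : (wInv l).length = l.length := by
  simp [wInv]

lemma IsPrimitive.wInv {x : List (Letter n)} (hx : IsPrimitive x) : IsPrimitive (wInv x) := by
  rintro ⟨r, l, hl, h⟩
  exact hx ⟨_root_.wInv r, l, hl, by rw [← wInv_lpow, ← h, wInv_wInv]⟩

lemma CyclicallyReduced.reduced_lpow {x : List (Letter n)} (hx : CyclicallyReduced x) :
    ∀ k, Reduced (lpow x k)
  | 0 => isChain_nil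
  | k + 1 => by
    refine isChain_append.2 ⟨hx.1, hx.reduced_lpow k, fun b hb c hc => ?_⟩
    exact hx.2 c b (mem_head?_of_mem_head?_lpow hc) hb

lemma not_isRotated_of_not_sameCyclicWord {v w : List (Letter n)} (h : ¬SameCyclicWord v w) :
    ¬w ~r v ∧ ¬w ~r wInv v := by
  constructor <;> rintro hr <;> obtain ⟨i, hi⟩ := hr.symm
  exacts [h (Or.inl ⟨i, hi.symm⟩), h (Or.inr ⟨i, hi.symm⟩)]

lemma orientedOcc_lpow_eq_zero {x w : List (Letter n)} {K : ℕ} (hx : IsPrimitive x)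
    (hw : ∀ t, IsPrimitive (w.rotate t)) (hK : w.length ≤ K * x.length) (hxw : ¬w ~r x) :
    orientedOcc (lpow x (K + 1)) w = 0 := by
  refine Finset.card_eq_zero.2 (Finset.filter_eq_empty_iff.2 fun t _ hpre => hxw ⟨t, ?_⟩)
  refine (hx.eq_of_lpow_prefix_lpow (hw t) hpre (by simpa using hK) ?_).symm
  have := length_pos_iff.2 (hw t).ne_nil
  simp only [lpow_length]
  nlinarith

lemma occ_lpow_eq_zero {x w : List (Letter n)} {K : ℕ} (hx : IsPrimitive x)
    (hw : ∀ t, IsPrimitive (w.rotate t)) (hK : w.length ≤ K * x.length) (hxw : ¬w ~r x)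
    (hxw' : ¬w ~r wInv x) : occ (lpow x (K + 1)) w = 0 := by
  rw [occ, orientedOcc_lpow_eq_zero hx hw hK hxw, wInv_lpow,
    orientedOcc_lpow_eq_zero hx.wInv hw (by simpa using hK) hxw']

lemma occ_lpow_self_pos {x : List (Letter n)} (hx : x ≠ []) (K : ℕ) :
    0 < occ (lpow x (K + 1)) x := by
  refine Nat.lt_add_right _ (Finset.card_pos.2 ⟨0, Finset.mem_filter.2 ⟨?_, ?_⟩⟩)
  · exact Finset.mem_range.2 (length_pos_iff.2 hx)
  · rw [rotate_zero]
    refine lpow_prefix_lpow_of_le x ?_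
    have := length_pos_iff.2 hx
    simp only [lpow_length]
    nlinarith

end Words

theorem linear_independence_of_counts_general (n m : ℕ)
    (w : Fin m → List (Letter n))
    (hcr : ∀ i, CyclicallyReduced (w i))
    (hdist : ∀ i j, i ≠ j → ¬ SameCyclicWord (w i) (w j))
    (hnp : ∀ (i : Fin m) (v : List (Letter n)), SameCyclicWord (w i) v →
      ¬ ∃ (p : List (Letter n)) (l : ℕ), 2 ≤ l ∧ v = lpow p l)
    (a : Fin m → ℤ) (ha : ∃ i, a i ≠ 0) :
    ∃ u : List (Letter n), u ≠ [] ∧ Reduced u ∧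
      (∑ i, a i * (occ u (w i) : ℤ)) ≠ 0 := by
  obtain ⟨i₀, hai⟩ := ha
  have hprim : ∀ j t, IsPrimitive ((w j).rotate t) := fun j t => hnp j _ (Or.inl ⟨t, rfl⟩)
  have hx : IsPrimitive (w i₀) := by simpa using hprim i₀ 0
  set K := Finset.univ.sup fun j => (w j).length
  have hK : ∀ j, (w j).length ≤ K * (w i₀).length := fun j =>
    (Finset.le_sup (f := fun j => (w j).length) (Finset.mem_univ j)).trans
      (Nat.le_mul_of_pos_right _ (length_pos_iff.2 hx.ne_nil))
  refine ⟨lpow (w i₀) (K + 1), append_ne_nil_of_left_ne_nil hx.ne_nil _,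
    (hcr i₀).reduced_lpow _, ?_⟩
  rw [Finset.sum_eq_single_of_mem i₀ (Finset.mem_univ _) fun j _ hj => ?_]
  · exact mul_ne_zero hai (by exact_mod_cast (occ_lpow_self_pos hx.ne_nil K).ne')
  · obtain ⟨hrot, hrot'⟩ := not_isRotated_of_not_sameCyclicWord (hdist i₀ j hj.symm)
    rw [occ_lpow_eq_zero hx (hprim j) (hK j) hrot hrot', Nat.cast_zero, mul_zero]

/-- If `W₁, …, W_m` are pairwise distinct cyclic words, none a proper
power, and `a₁, …, a_m` are integers not all zero, then some nonempty reduced word `u`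
has `Σ aᵢ · occ(u, Wᵢ) ≠ 0`. -/
theorem linear_independence_of_counts (n m : ℕ) (hm : 1 ≤ m)
    (w : Fin m → List (Letter n))
    (hne : ∀ i, w i ≠ []) (hcr : ∀ i, CyclicallyReduced (w i))
    (hdist : ∀ i j, i ≠ j → ¬ SameCyclicWord (w i) (w j))
    (hnp : ∀ (i : Fin m) (v : List (Letter n)), SameCyclicWord (w i) v →
      ¬ ∃ (p : List (Letter n)) (l : ℕ), 2 ≤ l ∧ v = lpow p l)
    (a : Fin m → ℤ) (ha : ∃ i, a i ≠ 0) :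
    ∃ u : List (Letter n), u ≠ [] ∧ Reduced u ∧
      (∑ i, a i * (occ u (w i) : ℤ)) ≠ 0 :=
  linear_independence_of_counts_general n m w hcr hdist hnp a ha
end
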